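/- arXiv:1806.10745 — 5 statements merged into one kernel-verified Lean document; each statement's English description precedes it below -/
import Mathlib

section
/- Let K ≥ 1, C > 0, μ ∈ (0, 1/K], ℓ ∈ [0,1]^K, and let p be a Borel probability measure supported on {s ∈ ℝ^K : 0 ≤ s(a) ≤ C for all a, and s ≠ 0}. Define P(a) = E_{s∼p}[s(a)/Σ_{a'=1}^K s(a')] and P^μ(a) = (1 − Kμ)·P(a) + μ. Then Σ_{a=1}^K E_{s∼p}[ℓ(a)²·s(a)²] / P^μ(a) ≤ C²·K²; equivalently, if a* ∼ P^μ and ℓ̂(a) := ℓ(a*)·1{a = a*}/P^μ(a*), then E_{a*∼P^μ} E_{s∼p} ⟨s, ℓ̂⟩² ≤ C²·K². (Taking C = 1 covers measures supported on ramp-loss values φ^γ(f(x)), giving the bound K²; taking C = 1 + B/γ covers measures supported on hinge-loss values ψ^γ(f(x)) of a class with sup_{f,x} ‖f(x)‖_∞ ≤ B, giving the bound (1 + B/γ)²·K².) -/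
open Finset MeasureTheory

/-!
Pointwise on the support, `s a ^ 2 ≤ C * s a` and `∑ i, s i ≤ K * C`, so
`E[ℓ a ^ 2 * s a ^ 2] ≤ K * C ^ 2 * P a`. The map `t ↦ t / ((1 - K μ) t + μ)` is concave and equals
`1` at `t = 1 / K`, so it lies below its tangent line there; summed over the probability vector `P`,
the tangent gives exactly `K`, hence `∑ a, P a / Pμ a ≤ K`.
-/

theorem div_smooth_le_tangent {K μ t : ℝ} (hμ : 0 < μ) (hKμ : K * μ ≤ 1) (ht : 0 ≤ t) :
    t / ((1 - K * μ) * t + μ) ≤ 1 + μ * K ^ 2 * t - μ * K := by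
  have hden : 0 < (1 - K * μ) * t + μ := by nlinarith
  rw [div_le_iff₀ hden]
  -- the two sides differ by `μ (1 - K μ) (1 - K t) ^ 2` after clearing the denominator
  nlinarith [mul_nonneg (mul_nonneg hμ.le (sub_nonneg.2 hKμ)) (sq_nonneg (1 - K * t))]

theorem sum_div_smooth_le_card {ι : Type*} [Fintype ι] {P : ι → ℝ} {μ : ℝ} (hP0 : 0 ≤ P)
    (hP1 : ∑ i, P i = 1) (hμ : 0 < μ) (hKμ : Fintype.card ι * μ ≤ 1) :
    ∑ i, P i / ((1 - Fintype.card ι * μ) * P i + μ) ≤ Fintype.card ι :=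
  calc ∑ i, P i / ((1 - Fintype.card ι * μ) * P i + μ)
      ≤ ∑ i, (1 + μ * (Fintype.card ι : ℝ) ^ 2 * P i - μ * Fintype.card ι) :=
        sum_le_sum fun i _ => div_smooth_le_tangent hμ hKμ (hP0 i)
    _ = Fintype.card ι := by
        simp only [sum_sub_distrib, sum_add_distrib, ← mul_sum, hP1, sum_const, card_univ,
          nsmul_eq_mul]
        ring

section

variable {ι : Type*} [Fintype ι] {C : ℝ} {p : Measure (ι → ℝ)}

theorem sq_le_card_mul_sq_mul_div_sum {s : ι → ℝ} (hs : 0 < s) (hC : ∀ i, s i ≤ C) (a : ι) :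
    s a ^ 2 ≤ Fintype.card ι * C ^ 2 * (s a / ∑ i, s i) := by
  have hsum : 0 < ∑ i, s i := Fintype.sum_pos hs
  have hsum_le : ∑ i, s i ≤ Fintype.card ι * C := by
    simpa using sum_le_card_nsmul univ s C fun i _ => hC i
  have hsa : 0 ≤ s a := hs.le a
  rw [← mul_div_assoc, le_div_iff₀ hsum]
  calc s a ^ 2 * ∑ i, s i ≤ (C * s a) * (Fintype.card ι * C) :=
        mul_le_mul (by nlinarith [hC a]) hsum_le hsum.le (mul_nonneg (hsa.trans (hC a)) hsa)
    _ = Fintype.card ι * C ^ 2 * s a := by ring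

theorem integral_apply_div_sum_nonneg (hpos : ∀ᵐ s ∂p, 0 < s) (a : ι) :
    0 ≤ ∫ s, s a / ∑ i, s i ∂p :=
  integral_nonneg_of_ae <| hpos.mono fun _ hs => div_nonneg (hs.le a) (Fintype.sum_pos hs).le

theorem integrable_apply_div_sum [IsFiniteMeasure p] (hpos : ∀ᵐ s ∂p, 0 < s) (a : ι) :
    Integrable (fun s => s a / ∑ i, s i) p := by
  refine Integrable.of_bound ((measurable_pi_apply a).div
    (Finset.measurable_sum univ fun i _ => measurable_pi_apply i)).aestronglyMeasurable 1 ?_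
  filter_upwards [hpos] with s hs
  have hsum : 0 < ∑ i, s i := Fintype.sum_pos hs
  rw [Real.norm_of_nonneg (div_nonneg (hs.le a) hsum.le)]
  exact div_le_one_of_le₀ (single_le_sum (fun i _ => hs.le i) (mem_univ a)) hsum.le

theorem sum_integral_apply_div_sum [IsProbabilityMeasure p] (hpos : ∀ᵐ s ∂p, 0 < s) :
    ∑ a, ∫ s, s a / ∑ i, s i ∂p = 1 :=
  calc ∑ a, ∫ s, s a / ∑ i, s i ∂p = ∫ _, (1 : ℝ) ∂p := by
        rw [← integral_finsetSum _ fun a _ => integrable_apply_div_sum hpos a]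
        refine integral_congr_ae (hpos.mono fun s hs => ?_)
        simp only [← sum_div, div_self (Fintype.sum_pos hs).ne']
    _ = 1 := by simp

theorem integral_mul_sq_apply_le [IsFiniteMeasure p] (hpos : ∀ᵐ s ∂p, 0 < s)
    (hC : ∀ᵐ s ∂p, ∀ i, s i ≤ C) {c : ℝ} (hc : c ^ 2 ≤ 1) (a : ι) :
    ∫ s, c ^ 2 * s a ^ 2 ∂p ≤ Fintype.card ι * C ^ 2 * ∫ s, s a / ∑ i, s i ∂p := by
  rw [integral_const_mul]
  refine mul_le_of_le_one_left (integral_nonneg fun s => sq_nonneg (s a)) hc |>.trans ?_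
  rw [← integral_const_mul]
  refine integral_mono_of_nonneg (ae_of_all _ fun s => sq_nonneg (s a))
    ((integrable_apply_div_sum hpos a).const_mul _) ?_
  filter_upwards [hpos, hC] with s hs hsC
  exact sq_le_card_mul_sq_mul_div_sum hs hsC a

end

theorem stmt2_general (K : ℕ) (C : ℝ)
    (μ : ℝ) (hμ0 : 0 < μ) (hμ : μ ≤ 1 / K)
    (ℓ : Fin K → ℝ) (hℓ : ∀ a, 0 ≤ ℓ a ∧ ℓ a ≤ 1)
    (p : Measure (Fin K → ℝ)) (hp : IsProbabilityMeasure p)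
    (hsupp : p {s | (∀ a, 0 ≤ s a ∧ s a ≤ C) ∧ s ≠ 0}ᶜ = 0)
    (P Pμ : Fin K → ℝ)
    (hP : ∀ a, P a = ∫ s, s a / (∑ a', s a') ∂p)
    (hPμ : ∀ a, Pμ a = (1 - K * μ) * P a + μ) :
    ∑ a, (∫ s, (ℓ a) ^ 2 * (s a) ^ 2 ∂p) / Pμ a ≤ C ^ 2 * K ^ 2 := by
  have hsupp' : ∀ᵐ s ∂p, (∀ a, 0 ≤ s a ∧ s a ≤ C) ∧ s ≠ 0 := mem_ae_iff.2 hsupp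
  have hpos : ∀ᵐ s ∂p, 0 < s :=
    hsupp'.mono fun s hs => lt_of_le_of_ne (fun a => (hs.1 a).1) (Ne.symm hs.2)
  have hC : ∀ᵐ s ∂p, ∀ a, s a ≤ C := hsupp'.mono fun s hs a => (hs.1 a).2
  have hKμ : (K : ℝ) * μ ≤ 1 :=
    (mul_le_mul_of_nonneg_left hμ K.cast_nonneg).trans (by simpa using mul_inv_le_one)
  have hP0 : 0 ≤ P := fun a => (hP a).symm ▸ integral_apply_div_sum_nonneg hpos a
  have hP1 : ∑ a, P a = 1 := by simpa only [hP] using sum_integral_apply_div_sum hpos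
  have hweight : ∀ a, ∫ s, ℓ a ^ 2 * s a ^ 2 ∂p ≤ K * C ^ 2 * P a := fun a => by
    simpa [hP] using integral_mul_sq_apply_le hpos hC (pow_le_one₀ (hℓ a).1 (hℓ a).2) a
  calc ∑ a, (∫ s, ℓ a ^ 2 * s a ^ 2 ∂p) / Pμ a ≤ ∑ a, K * C ^ 2 * P a / Pμ a :=
        sum_le_sum fun a _ => div_le_div_of_nonneg_right (hweight a)
          (hPμ a ▸ add_nonneg (mul_nonneg (sub_nonneg.2 hKμ) (hP0 a)) hμ0.le)
    _ = K * C ^ 2 * ∑ a, P a / ((1 - Fintype.card (Fin K) * μ) * P a + μ) := by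
        simp only [mul_sum, mul_div_assoc, hPμ, Fintype.card_fin]
    _ ≤ K * C ^ 2 * K := by
        gcongr
        simpa using sum_div_smooth_le_card hP0 hP1 hμ0 (by simpa using hKμ)
    _ = C ^ 2 * K ^ 2 := by ring

/-- variance control, Lemma 2 cases `S = φ^γ∘F` and `S = ψ^γ∘F`:
for a probability measure `p` supported on nonzero, coordinatewise `[0,C]`-valued vectors,
with induced action distribution `P(a) = E_{s∼p}[s(a)/Σ_{a'} s(a')]` and its `μ`-smoothing
`P^μ`, one has `Σ_a E_{s∼p}[ℓ(a)²·s(a)²] / P^μ(a) ≤ C²·K²`. -/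
theorem stmt2 (K : ℕ) (hK : 1 ≤ K) (C : ℝ) (hC : 0 < C)
    (μ : ℝ) (hμ0 : 0 < μ) (hμ : μ ≤ 1 / K)
    (ℓ : Fin K → ℝ) (hℓ : ∀ a, 0 ≤ ℓ a ∧ ℓ a ≤ 1)
    (p : Measure (Fin K → ℝ)) (hp : IsProbabilityMeasure p)
    (hsupp : p {s | (∀ a, 0 ≤ s a ∧ s a ≤ C) ∧ s ≠ 0}ᶜ = 0)
    (P Pμ : Fin K → ℝ)
    (hP : ∀ a, P a = ∫ s, s a / (∑ a', s a') ∂p)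
    (hPμ : ∀ a, Pμ a = (1 - K * μ) * P a + μ) :
    ∑ a, (∫ s, (ℓ a) ^ 2 * (s a) ^ 2 ∂p) / Pμ a ≤ C ^ 2 * K ^ 2 :=
  stmt2_general K C μ hμ0 hμ ℓ hℓ p hp hsupp P Pμ hP hPμ
end

section
/- There is a universal constant c such that the following hold for all K ≥ 2, T ≥ 1, γ > 0. (a) For every finite class F of functions X → ℝ^K_{=0} with |F| ≥ 2 and sup_{f,x}‖f(x)‖_∞ ≤ 1, there exists a randomized contextual bandit strategy with, for every sequence (x_t, ℓ_t) ∈ X × [0,1]^K: E[Σ_{t=1}^T ℓ_t(a_t)] ≤ min_{f∈F} L_T^γ(f) + c·K·√(T·log|F|). (b) For every finite policy class Π of functions X → {1,…,K} with |Π| ≥ 2, there exists a randomized contextual bandit strategy with, for every sequence (x_t, ℓ_t) ∈ X × [0,1]^K: E[Σ_{t=1}^T ℓ_t(a_t)] ≤ min_{π∈Π} Σ_{t=1}^T ℓ_t(π(x_t)) + c·√(K·T·log|Π|). -/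
/-!
Both parts are regret bounds for EXP4 (exponential weights over a finite set of experts, each
recommending one action per context). The learner keeps the importance-weighted loss estimates
`L̂ f = Σ_t 1{f recommends a_t} ℓ_t(a_t) / p_t(a_t)` and plays the weighted vote of the
experts with weights `exp (-η L̂ f)`. Along every action sequence, `exp (-z) ≤ 1 - z + z² / 2`
makes the log-potential `log Σ_f exp (-η L̂ f)` drop by at least `η ℓ_t(a_t) - η² / (2 p_t(a_t))`
per round, which gives `Σ_t ℓ_t(a_t) ≤ L̂ f + log N / η + (η / 2) Σ_t 1 / p_t(a_t)`.
Taking expectations one round at a time, `L̂ f` has mean at most the loss of `f` and each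
`1 / p_t(a_t)` has mean at most `K`; then `η = √(2 log N / (K T))` gives regret
`√(2 K T log N)`. For (a), the expert attached to `f` plays a maximal coordinate of `f x`, which
is nonnegative since the coordinates sum to zero, so its loss is counted in the margin loss.
-/

noncomputable section

open Finset MeasureTheory

/-- The observed history before round `t`. -/
def histOf {X : Type*} {K T : ℕ} (x : Fin T → X) (ℓ : Fin T → Fin K → ℝ)
    (a : Fin T → Fin K) (t : Fin T) : List (X × Fin K × ℝ) :=
  List.ofFn fun i : Fin t.1 =>
    (x ⟨i.1, i.2.trans t.2⟩, a ⟨i.1, i.2.trans t.2⟩,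
      ℓ ⟨i.1, i.2.trans t.2⟩ (a ⟨i.1, i.2.trans t.2⟩))

/-- A randomized contextual bandit strategy. -/
def ValidStrat {X : Type*} (K : ℕ) (strat : List (X × Fin K × ℝ) → X → Fin K → ℝ) : Prop :=
  ∀ h x, (∀ b, 0 ≤ strat h x b) ∧ ∑ b, strat h x b = 1

/-- Expected cumulative loss `E[Σ_t ℓ_t(a_t)]` of a strategy on a fixed sequence. -/
def expLoss {X : Type*} {K T : ℕ} (strat : List (X × Fin K × ℝ) → X → Fin K → ℝ)
    (x : Fin T → X) (ℓ : Fin T → Fin K → ℝ) : ℝ :=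
  ∑ a : Fin T → Fin K, (∏ t, strat (histOf x ℓ a t) (x t) (a t)) * ∑ t, ℓ t (a t)

/-- The `γ`-margin cumulative loss `L_T^γ(f)`. -/
def marginLoss {X : Type*} {K T : ℕ} (γ : ℝ) (x : Fin T → X) (ℓ : Fin T → Fin K → ℝ)
    (f : X → Fin K → ℝ) : ℝ :=
  ∑ t, ∑ b, if -γ ≤ f (x t) b then ℓ t b else 0

open Function

theorem DependsOn.update_eq {ι β : Type*} {α : ι → Type*} [DecidableEq ι]
    {G : (∀ i, α i) → β} {s : Set ι} (hG : DependsOn G s) {i : ι} (hi : i ∉ s)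
    (a : ∀ i, α i) (b : α i) : G (Function.update a i b) = G a :=
  hG fun _ hj => update_of_ne (ne_of_mem_of_not_mem hj hi) _ _

theorem Fintype.sum_sum_update {ι α M : Type*} [Fintype ι] [DecidableEq ι] [Fintype α]
    [AddCommMonoid M] (i : ι) (g : (ι → α) → M) :
    ∑ a : ι → α, ∑ b, g (update a i b) = Fintype.card α • ∑ a, g a := by
  set e := Equiv.piSplitAt i fun _ => α
  have hupd : ∀ c b (r : ∀ j : {j // j ≠ i}, α), update (e.symm (c, r)) i b = e.symm (b, r) := by
    intro c b r
    funext j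
    by_cases hj : j = i
    · subst hj; simp [e, Equiv.piSplitAt_symm_apply]
    · simp [e, Equiv.piSplitAt_symm_apply, hj]
  calc ∑ a, ∑ b, g (update a i b)
      = ∑ c : α, ∑ r, ∑ b, g (e.symm (b, r)) := by
        rw [← e.symm.sum_comp, Fintype.sum_prod_type]
        simp only [hupd]
    _ = Fintype.card α • ∑ a, g a := by
        rw [sum_const, card_univ, Finset.sum_comm, ← Fintype.sum_prod_type', e.symm.sum_comp]

theorem Fin.sum_univ_sub_eq {M : Type*} [AddCommGroup M] (u : ℕ → M) (n : ℕ) :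
    ∑ i : Fin n, (u (i + 1) - u i) = u n - u 0 :=
  (Fin.sum_univ_eq_sum_range (fun i => u (i + 1) - u i) n).trans (sum_range_sub u n)

theorem Real.exp_neg_le_one_sub_add_sq_div_two {z : ℝ} (hz : 0 ≤ z) :
    Real.exp (-z) ≤ 1 - z + z ^ 2 / 2 := by
  -- the product is `1 + z ^ 4 / 4`
  have hprod : 1 ≤ (1 - z + z ^ 2 / 2) * (1 + z + z ^ 2 / 2) := by nlinarith [pow_nonneg hz 4]
  have hpos : 0 < 1 - z + z ^ 2 / 2 := by nlinarith [sq_nonneg (z - 1)]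
  rw [Real.exp_neg, inv_le_iff_one_le_mul₀' (Real.exp_pos z)]
  calc 1 ≤ (1 - z + z ^ 2 / 2) * (1 + z + z ^ 2 / 2) := hprod
    _ ≤ (1 - z + z ^ 2 / 2) * Real.exp z := by gcongr; exact Real.quadratic_le_exp_of_nonneg hz
    _ = _ := mul_comm _ _

theorem Real.div_sqrt_div_add_sqrt_div_mul {A B : ℝ} (hA : 0 ≤ A) (hB : 0 < B) :
    A / √(A / B) + √(A / B) * B = 2 * √(A * B) := by
  rcases hA.eq_or_lt with rfl | hA
  · simp
  have h₁ : √(A / B) * B = √(A * B) := by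
    rw [Real.sqrt_div hA.le, Real.sqrt_mul hA.le]
    field_simp
    rw [Real.sq_sqrt hB.le]
  have h₂ : A / √(A / B) = √(A * B) := by
    rw [Real.sqrt_div hA.le, Real.sqrt_mul hA.le]
    field_simp
    rw [Real.sq_sqrt hA.le]
  rw [h₁, h₂, two_mul]

theorem Real.sqrt_mul_le_mul_sqrt {x : ℝ} (hx : 1 ≤ x) (y : ℝ) : √(x * y) ≤ x * √y := by
  rw [Real.sqrt_mul (by linarith)]
  gcongr
  rw [Real.sqrt_le_left (by linarith)]
  nlinarith

theorem le_csInf_image_add {β : Type*} {s : Set β} (hs : s.Nonempty) {g : β → ℝ} {y R : ℝ}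
    (h : ∀ f ∈ s, y ≤ g f + R) : y ≤ sInf (g '' s) + R := by
  rw [← sub_le_iff_le_add]
  exact le_csInf (hs.image g) (Set.forall_mem_image.2 fun f hf => sub_le_iff_le_add.2 (h f hf))

theorem nonneg_of_sum_eq_zero_of_forall_le {α : Type*} [Fintype α] [Nonempty α] {v : α → ℝ}
    (hv : ∑ b, v b = 0) {b : α} (hb : ∀ b', v b' ≤ v b) : 0 ≤ v b := by
  have hle := sum_le_card_nsmul univ v (v b) fun b' _ => hb b'
  rw [hv, nsmul_eq_mul] at hle
  exact nonneg_of_mul_nonneg_right hle (by simp [Fintype.card_pos])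

namespace ContextualBandit

section SeqKernel

variable {α : Type*} [Fintype α] {T : ℕ} (p : Fin T → (Fin T → α) → ℝ)

def seqMean (G : (Fin T → α) → ℝ) : ℝ := ∑ a, (∏ t, p t a) * G a

/-- The first `m` actions are drawn from `p`, the remaining ones uniformly. -/
def partialMean (m : ℕ) (G : (Fin T → α) → ℝ) : ℝ :=
  (∑ a, (∏ t with t.1 < m, p t a) * G a) / Fintype.card α ^ (T - m)

variable {p}

theorem seqMean_eq_partialMean (G : (Fin T → α) → ℝ) : seqMean p G = partialMean p T G := by
  simp [seqMean, partialMean]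

theorem seqMean_add (G H : (Fin T → α) → ℝ) :
    seqMean p (fun a => G a + H a) = seqMean p G + seqMean p H := by
  simp only [seqMean, mul_add, sum_add_distrib]

theorem seqMean_const_mul (c : ℝ) (G : (Fin T → α) → ℝ) :
    seqMean p (fun a => c * G a) = c * seqMean p G := by
  simp only [seqMean, mul_sum]
  exact sum_congr rfl fun a _ => by ring

theorem seqMean_sum {κ : Type*} (s : Finset κ) (G : κ → (Fin T → α) → ℝ) :
    seqMean p (fun a => ∑ i ∈ s, G i a) = ∑ i ∈ s, seqMean p (G i) := by
  simp only [seqMean, mul_sum]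
  exact sum_comm

theorem partialMean_zero_const [Nonempty α] (c : ℝ) : partialMean p 0 (fun _ => c) = c := by
  simp [partialMean]

/-- `p t a` is the probability of the action `a t` at round `t`, given the earlier actions. -/
structure IsSeqKernel (p : Fin T → (Fin T → α) → ℝ) : Prop where
  nonneg : ∀ t a, 0 ≤ p t a
  dependsOn : ∀ t, DependsOn (p t) (Set.Iic t)
  sum_update : ∀ t a, ∑ b, p t (update a t b) = 1

variable (p) in
def condMean (t : Fin T) (G : (Fin T → α) → ℝ) (a : Fin T → α) : ℝ :=
  ∑ b, p t (update a t b) * G (update a t b)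

namespace IsSeqKernel

theorem partialMean_succ [Nonempty α] (hp : IsSeqKernel p) {m : ℕ} (hm : m < T)
    (G : (Fin T → α) → ℝ) :
    partialMean p (m + 1) G = partialMean p m (condMean p ⟨m, hm⟩ G) := by
  set t : Fin T := ⟨m, hm⟩
  have hprefix : ∀ a b, ∏ s with s.1 < m, p s (update a t b) = ∏ s with s.1 < m, p s a := by
    refine fun a b => prod_congr rfl fun s hs => DependsOn.update_eq (hp.dependsOn s) ?_ a b
    simp only [mem_filter, mem_univ, true_and] at hs
    simp [t, Fin.le_def, hs]
  have hsucc : ∀ a, ∏ s with s.1 < m + 1, p s a = (∏ s with s.1 < m, p s a) * p t a := by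
    have hfilter : univ.filter (fun s : Fin T => s.1 < m + 1)
        = insert t (univ.filter fun s : Fin T => s.1 < m) := by
      ext s
      simp [t, Fin.ext_iff]
      omega
    intro a
    rw [hfilter, prod_insert (by simp [t]), mul_comm]
  have hsum : ∑ a, (∏ s with s.1 < m, p s a) * condMean p t G a
      = Fintype.card α * ∑ a, (∏ s with s.1 < m + 1, p s a) * G a := by
    calc ∑ a, (∏ s with s.1 < m, p s a) * condMean p t G a
        = ∑ a, ∑ b, (fun a => (∏ s with s.1 < m, p s a) * (p t a * G a)) (update a t b) := by
          simp only [condMean, mul_sum, hprefix]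
      _ = Fintype.card α * ∑ a, (∏ s with s.1 < m + 1, p s a) * G a := by
          rw [Fintype.sum_sum_update t fun a => (∏ s with s.1 < m, p s a) * (p t a * G a),
            nsmul_eq_mul]
          simp only [hsucc, mul_assoc]
  have hK : (Fintype.card α : ℝ) ≠ 0 := by positivity
  rw [partialMean, partialMean, hsum, show T - m = T - (m + 1) + 1 by omega, pow_succ]
  field_simp

theorem condMean_eq_self (hp : IsSeqKernel p) {G : (Fin T → α) → ℝ} {s : Set (Fin T)}
    (hG : DependsOn G s) {t : Fin T} (ht : t ∉ s) : condMean p t G = G := by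
  funext a
  simp only [condMean, hG.update_eq ht, ← sum_mul, hp.sum_update, one_mul]

theorem partialMean_eq_of_dependsOn [Nonempty α] (hp : IsSeqKernel p) {G : (Fin T → α) → ℝ}
    {m : ℕ} (hG : DependsOn G {s | s.1 < m}) {n : ℕ} (hmn : m ≤ n) (hn : n ≤ T) :
    partialMean p n G = partialMean p m G := by
  induction n, hmn using Nat.le_induction with
  | base => rfl
  | succ n hmn ih =>
    rw [hp.partialMean_succ hn, hp.condMean_eq_self hG (by simp; omega), ih (by omega)]

theorem partialMean_const [Nonempty α] (hp : IsSeqKernel p) {m : ℕ} (hm : m ≤ T) (c : ℝ) :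
    partialMean p m (fun _ => c) = c := by
  rw [hp.partialMean_eq_of_dependsOn ((dependsOn_const c).mono (Set.empty_subset _))
    (Nat.zero_le m) hm, partialMean_zero_const]

theorem partialMean_mono (hp : IsSeqKernel p) (m : ℕ) {G H : (Fin T → α) → ℝ}
    (hGH : G ≤ H) : partialMean p m G ≤ partialMean p m H := by
  unfold partialMean
  gcongr with a
  · exact prod_nonneg fun t _ => hp.nonneg t a
  · exact hGH a

theorem seqMean_const [Nonempty α] (hp : IsSeqKernel p) (c : ℝ) : seqMean p (fun _ => c) = c := by
  rw [seqMean_eq_partialMean, hp.partialMean_const le_rfl]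

theorem seqMean_mono (hp : IsSeqKernel p) {G H : (Fin T → α) → ℝ}
    (hGH : ∀ a, (∀ t, 0 < p t a) → G a ≤ H a) : seqMean p G ≤ seqMean p H := by
  refine sum_le_sum fun a _ => ?_
  by_cases hpos : ∀ t, 0 < p t a
  · exact mul_le_mul_of_nonneg_left (hGH a hpos) (prod_nonneg fun t _ => hp.nonneg t a)
  · obtain ⟨t, ht⟩ := not_forall.mp hpos
    have hzero : p t a = 0 := le_antisymm (not_lt.mp ht) (hp.nonneg t a)
    simp [prod_eq_zero (f := fun t => p t a) (mem_univ t) hzero]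

theorem seqMean_le_of_condMean_le [Nonempty α] (hp : IsSeqKernel p) {G : (Fin T → α) → ℝ}
    {t : Fin T} (hG : DependsOn G (Set.Iic t)) {c : ℝ} (hc : ∀ a, condMean p t G a ≤ c) :
    seqMean p G ≤ c := calc
  seqMean p G = partialMean p (t.1 + 1) G := by
    rw [seqMean_eq_partialMean]
    exact hp.partialMean_eq_of_dependsOn (hG.mono fun s (hs : s ≤ t) => show s.1 < t.1 + 1 by omega)
      (by omega) le_rfl
  _ = partialMean p t.1 (condMean p t G) := hp.partialMean_succ t.2 G
  _ ≤ partialMean p t.1 (fun _ => c) := hp.partialMean_mono _ hc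
  _ = c := hp.partialMean_const t.2.le c

theorem seqMean_inv_le [Nonempty α] (hp : IsSeqKernel p) (t : Fin T) :
    seqMean p (fun a => (p t a)⁻¹) ≤ Fintype.card α := by
  refine hp.seqMean_le_of_condMean_le (t := t) (fun a a' h => by rw [hp.dependsOn t h])
    fun a => ?_
  calc ∑ b, p t (update a t b) * (p t (update a t b))⁻¹ ≤ ∑ _b : α, (1 : ℝ) :=
        sum_le_sum fun b _ => mul_inv_le_one
    _ = Fintype.card α := by simp

theorem seqMean_ite_div_le [Nonempty α] [DecidableEq α] (hp : IsSeqKernel p) (t : Fin T) (b : α)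
    {y : ℝ} (hy : 0 ≤ y) : seqMean p (fun a => if a t = b then y / p t a else 0) ≤ y := by
  refine hp.seqMean_le_of_condMean_le (t := t)
    (fun a a' h => by simp only [h t Set.self_mem_Iic, hp.dependsOn t h]) fun a => ?_
  simp only [condMean, update_self, mul_ite, mul_zero, sum_ite_eq']
  simp only [mem_univ, if_true]
  rcases (hp.nonneg t (update a t b)).eq_or_lt with hzero | hpos
  · rw [← hzero, zero_mul]; exact hy
  · rw [mul_div_cancel₀ _ hpos.ne']

end IsSeqKernel

end SeqKernel

section Strategy

variable {X : Type*} {K T : ℕ}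

def actionKernel (strat : List (X × Fin K × ℝ) → X → Fin K → ℝ) (x : Fin T → X)
    (ℓ : Fin T → Fin K → ℝ) (t : Fin T) (a : Fin T → Fin K) : ℝ :=
  strat (histOf x ℓ a t) (x t) (a t)

theorem histOf_dependsOn (x : Fin T → X) (ℓ : Fin T → Fin K → ℝ) (t : Fin T) :
    DependsOn (fun a => histOf x ℓ a t) (Set.Iio t) := by
  intro a a' h
  simp only [histOf]
  congr 1
  funext i
  rw [h _ (show (⟨i.1, i.2.trans t.2⟩ : Fin T) < t from i.2)]

theorem _root_.ValidStrat.isSeqKernel {strat : List (X × Fin K × ℝ) → X → Fin K → ℝ}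
    (h : ValidStrat K strat) (x : Fin T → X) (ℓ : Fin T → Fin K → ℝ) :
    IsSeqKernel (actionKernel strat x ℓ) where
  nonneg t a := (h _ _).1 _
  dependsOn t a a' hag := by
    simp only [actionKernel]
    rw [show histOf x ℓ a t = histOf x ℓ a' t from
      histOf_dependsOn x ℓ t fun s (hs : s < t) => hag s hs.le, hag t Set.self_mem_Iic]
  sum_update t a := by
    have hpast : ∀ b, histOf x ℓ (update a t b) t = histOf x ℓ a t :=
      (histOf_dependsOn x ℓ t).update_eq (lt_irrefl t) a
    simp only [actionKernel, update_self, hpast]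
    exact (h _ _).2

end Strategy

section Exp4

variable {ι X : Type*} {K : ℕ} (η : ℝ) (F : Finset ι) (pol : ι → X → Fin K)

def weight (L : ι → ℝ) (i : ι) : ℝ := Real.exp (-(η * L i))

def totalWeight (L : ι → ℝ) : ℝ := ∑ i ∈ F, weight η L i

def actionProb (L : ι → ℝ) (x : X) (b : Fin K) : ℝ :=
  (∑ i ∈ F with pol i x = b, weight η L i) / totalWeight η F L

def updateEstimate (L : ι → ℝ) (e : X × Fin K × ℝ) : ι → ℝ :=
  fun i => L i + if pol i e.1 = e.2.1 then e.2.2 / actionProb η F pol L e.1 e.2.1 else 0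

def estimate (h : List (X × Fin K × ℝ)) : ι → ℝ := h.foldl (updateEstimate η F pol) 0

theorem estimate_nil : estimate η F pol [] = 0 := rfl

def exp4 (h : List (X × Fin K × ℝ)) (x : X) (b : Fin K) : ℝ :=
  actionProb η F pol (estimate η F pol h) x b

variable {η F}

theorem weight_pos (L : ι → ℝ) (i : ι) : 0 < weight η L i := Real.exp_pos _

theorem totalWeight_pos (hF : F.Nonempty) (L : ι → ℝ) : 0 < totalWeight η F L :=
  sum_pos (fun i _ => weight_pos L i) hF

theorem actionProb_nonneg (L : ι → ℝ) (x : X) (b : Fin K) : 0 ≤ actionProb η F pol L x b :=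
  div_nonneg (sum_nonneg fun i _ => (weight_pos L i).le) (sum_nonneg fun i _ => (weight_pos L i).le)

theorem sum_actionProb (hF : F.Nonempty) (L : ι → ℝ) (x : X) :
    ∑ b, actionProb η F pol L x b = 1 := by
  simp only [actionProb]
  rw [← sum_div, sum_fiberwise_eq_sum_filter, filter_true_of_mem fun _ _ => mem_univ _]
  exact div_self (totalWeight_pos hF L).ne'

theorem validStrat_exp4 (hF : F.Nonempty) : ValidStrat K (exp4 η F pol) :=
  fun _ x => ⟨actionProb_nonneg pol _ x, sum_actionProb pol hF _ x⟩

theorem totalWeight_zero : totalWeight η F (0 : ι → ℝ) = F.card := by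
  simp [totalWeight, weight]

theorem neg_mul_le_log_totalWeight (L : ι → ℝ) {i : ι} (hi : i ∈ F) :
    -(η * L i) ≤ Real.log (totalWeight η F L) := by
  rw [← Real.log_exp (-(η * L i))]
  exact Real.log_le_log (Real.exp_pos _)
    (single_le_sum (f := weight η L) (fun j _ => (weight_pos L j).le) hi)

theorem totalWeight_updateEstimate_le (hη : 0 ≤ η) (hF : F.Nonempty) (L : ι → ℝ) {x : X}
    {b : Fin K} {l : ℝ} (hl₀ : 0 ≤ l) (hl₁ : l ≤ 1) (hp : 0 < actionProb η F pol L x b) :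
    totalWeight η F (updateEstimate η F pol L (x, b, l))
      ≤ totalWeight η F L * (1 - η * l + η ^ 2 / (2 * actionProb η F pol L x b)) := by
  set p := actionProb η F pol L x b
  set W := totalWeight η F L
  have hW : 0 < W := totalWeight_pos hF L
  set z := η * (l / p)
  have hselected : ∑ i ∈ F with pol i x = b, weight η L i = p * W :=
    (div_mul_cancel₀ _ hW.ne').symm
  have hround : ∀ i, weight η (updateEstimate η F pol L (x, b, l)) i
      ≤ weight η L i * (1 + if pol i x = b then -z + z ^ 2 / 2 else 0) := by
    intro i
    have hsplit : weight η (updateEstimate η F pol L (x, b, l)) i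
        = weight η L i * Real.exp (-(η * if pol i x = b then l / p else 0)) := by
      rw [weight, weight, ← Real.exp_add]
      congr 1
      simp only [updateEstimate, p]
      ring
    rw [hsplit]
    refine mul_le_mul_of_nonneg_left ?_ (weight_pos L i).le
    split_ifs
    · linarith [Real.exp_neg_le_one_sub_add_sq_div_two (show 0 ≤ z by positivity)]
    · simp
  calc totalWeight η F (updateEstimate η F pol L (x, b, l))
      ≤ ∑ i ∈ F, weight η L i * (1 + if pol i x = b then -z + z ^ 2 / 2 else 0) :=
        sum_le_sum fun i _ => hround i
    _ = W + p * W * (-z + z ^ 2 / 2) := by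
        simp only [mul_add, mul_one, mul_ite, mul_zero, sum_add_distrib, ← sum_filter,
          ← sum_mul, hselected]
        rfl
    _ = W * (1 - η * l + η ^ 2 / (2 * p) * l ^ 2) := by
        simp only [z]
        field_simp
        ring
    _ ≤ W * (1 - η * l + η ^ 2 / (2 * p)) := by
        gcongr
        exact mul_le_of_le_one_right (by positivity) (pow_le_one₀ hl₀ hl₁)

theorem log_totalWeight_updateEstimate_le (hη : 0 ≤ η) (hF : F.Nonempty) (L : ι → ℝ) {x : X}
    {b : Fin K} {l : ℝ} (hl₀ : 0 ≤ l) (hl₁ : l ≤ 1) (hp : 0 < actionProb η F pol L x b) :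
    Real.log (totalWeight η F (updateEstimate η F pol L (x, b, l)))
      ≤ Real.log (totalWeight η F L) - η * l + η ^ 2 / (2 * actionProb η F pol L x b) := by
  set r := 1 - η * l + η ^ 2 / (2 * actionProb η F pol L x b)
  have hle := totalWeight_updateEstimate_le pol hη hF L hl₀ hl₁ hp
  have hr : 0 < r := pos_of_mul_pos_right ((totalWeight_pos hF _).trans_le hle)
    (totalWeight_pos hF L).le
  calc Real.log (totalWeight η F (updateEstimate η F pol L (x, b, l)))
      ≤ Real.log (totalWeight η F L * r) := Real.log_le_log (totalWeight_pos hF _) hle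
    _ = Real.log (totalWeight η F L) + Real.log r :=
        Real.log_mul (totalWeight_pos hF L).ne' hr.ne'
    _ ≤ Real.log (totalWeight η F L) + (r - 1) := by gcongr; exact Real.log_le_sub_one_of_pos hr
    _ = _ := by ring

end Exp4

section Exp4Sequence

variable {ι X : Type*} {K T : ℕ} {η : ℝ} {F : Finset ι} (pol : ι → X → Fin K)
  (x : Fin T → X) (ℓ : Fin T → Fin K → ℝ)

def history (a : Fin T → Fin K) : List (X × Fin K × ℝ) :=
  List.ofFn fun t => (x t, a t, ℓ t (a t))

theorem histOf_eq_take (a : Fin T → Fin K) (t : Fin T) :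
    histOf x ℓ a t = (history x ℓ a).take t := by
  apply List.ext_getElem
  · simp [histOf, history, t.2.le]
  · intro i _ _
    simp [histOf, history]

theorem take_length_history (a : Fin T → Fin K) : (history x ℓ a).take T = history x ℓ a :=
  List.take_of_length_le (by simp [history])

theorem estimate_take_succ (a : Fin T → Fin K) (t : Fin T) :
    estimate η F pol ((history x ℓ a).take (t + 1))
      = updateEstimate η F pol (estimate η F pol ((history x ℓ a).take t))
          (x t, a t, ℓ t (a t)) := by
  have hsnoc :
      (history x ℓ a).take (t + 1) = (history x ℓ a).take t ++ [(x t, a t, ℓ t (a t))] := by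
    simp [List.take_add_one, history]
  rw [hsnoc, estimate, List.foldl_concat]
  rfl

theorem actionKernel_exp4 (a : Fin T → Fin K) (t : Fin T) :
    actionKernel (exp4 η F pol) x ℓ t a
      = actionProb η F pol (estimate η F pol ((history x ℓ a).take t)) (x t) (a t) := by
  rw [actionKernel, exp4, histOf_eq_take]

variable {x ℓ}

theorem estimate_history_eq_sum (a : Fin T → Fin K) (f : ι) :
    estimate η F pol (history x ℓ a) f = ∑ t, if a t = pol f (x t)
      then ℓ t (pol f (x t)) / actionKernel (exp4 η F pol) x ℓ t a else 0 := by
  have htele := Fin.sum_univ_sub_eq (fun n => estimate η F pol ((history x ℓ a).take n) f) T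
  rw [take_length_history, List.take_zero, estimate_nil, Pi.zero_apply] at htele
  rw [← sub_zero (estimate η F pol (history x ℓ a) f), ← htele]
  refine sum_congr rfl fun t _ => ?_
  rw [estimate_take_succ, actionKernel_exp4]
  by_cases h : a t = pol f (x t)
  · simp [updateEstimate, h]
  · simp only [updateEstimate, if_neg h, if_neg (Ne.symm h), add_sub_cancel_left]

theorem log_totalWeight_estimate_history_le (hη : 0 ≤ η) (hF : F.Nonempty)
    (hℓ : ∀ t b, 0 ≤ ℓ t b ∧ ℓ t b ≤ 1) (a : Fin T → Fin K)
    (hpos : ∀ t, 0 < actionKernel (exp4 η F pol) x ℓ t a) :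
    Real.log (totalWeight η F (estimate η F pol (history x ℓ a))) ≤ Real.log F.card
      + ∑ t, (-(η * ℓ t (a t)) + η ^ 2 / (2 * actionKernel (exp4 η F pol) x ℓ t a)) := by
  have htele := Fin.sum_univ_sub_eq
    (fun n => Real.log (totalWeight η F (estimate η F pol ((history x ℓ a).take n)))) T
  rw [take_length_history, List.take_zero, estimate_nil, totalWeight_zero] at htele
  rw [← sub_le_iff_le_add', ← htele]
  refine sum_le_sum fun t _ => ?_
  rw [estimate_take_succ, sub_le_iff_le_add', ← add_assoc, ← sub_eq_add_neg]
  have hpt := hpos t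
  rw [actionKernel_exp4] at hpt ⊢
  exact log_totalWeight_updateEstimate_le pol hη hF _ (hℓ t _).1 (hℓ t _).2 hpt

theorem sum_loss_le_estimate_add (hη : 0 < η) (hF : F.Nonempty)
    (hℓ : ∀ t b, 0 ≤ ℓ t b ∧ ℓ t b ≤ 1) (a : Fin T → Fin K)
    (hpos : ∀ t, 0 < actionKernel (exp4 η F pol) x ℓ t a) {f : ι} (hf : f ∈ F) :
    ∑ t, ℓ t (a t) ≤ estimate η F pol (history x ℓ a) f + Real.log F.card / η
      + η / 2 * ∑ t, (actionKernel (exp4 η F pol) x ℓ t a)⁻¹ := by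
  have hlog := (neg_mul_le_log_totalWeight _ hf).trans
    (log_totalWeight_estimate_history_le pol hη.le hF hℓ a hpos)
  have hsplit : ∑ t, (-(η * ℓ t (a t)) + η ^ 2 / (2 * actionKernel (exp4 η F pol) x ℓ t a))
      = η * (-∑ t, ℓ t (a t) + η / 2 * ∑ t, (actionKernel (exp4 η F pol) x ℓ t a)⁻¹) := by
    simp only [mul_add, mul_neg, sum_add_distrib, sum_neg_distrib, mul_sum]
    congr 1
    exact sum_congr rfl fun t _ => by field_simp
  rw [hsplit] at hlog
  refine le_of_mul_le_mul_left ?_ hη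
  rw [mul_add, mul_add, mul_div_cancel₀ _ hη.ne']
  linarith

theorem expLoss_exp4_le [NeZero K] (hη : 0 < η) (hF : F.Nonempty)
    (hℓ : ∀ t b, 0 ≤ ℓ t b ∧ ℓ t b ≤ 1) {f : ι} (hf : f ∈ F) :
    expLoss (exp4 η F pol) x ℓ
      ≤ ∑ t, ℓ t (pol f (x t)) + (Real.log F.card / η + η * (K * T / 2)) := by
  set p := actionKernel (exp4 η F pol) x ℓ
  have hp : IsSeqKernel p := ValidStrat.isSeqKernel (validStrat_exp4 pol hF) x ℓ
  calc expLoss (exp4 η F pol) x ℓ = seqMean p fun a => ∑ t, ℓ t (a t) := rfl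
    _ ≤ seqMean p fun a => ∑ t, (if a t = pol f (x t) then ℓ t (pol f (x t)) / p t a else 0)
          + (Real.log F.card / η + η / 2 * ∑ t, (p t a)⁻¹) := by
        refine hp.seqMean_mono fun a ha => ?_
        rw [← estimate_history_eq_sum, ← add_assoc]
        exact sum_loss_le_estimate_add pol hη hF hℓ a ha hf
    _ = ∑ t, seqMean p (fun a => if a t = pol f (x t) then ℓ t (pol f (x t)) / p t a else 0)
          + (Real.log F.card / η + η / 2 * ∑ t, seqMean p fun a => (p t a)⁻¹) := by
        simp only [seqMean_add, seqMean_sum, seqMean_const_mul, hp.seqMean_const]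
    _ ≤ ∑ t, ℓ t (pol f (x t)) + (Real.log F.card / η + η / 2 * ∑ _t : Fin T, (K : ℝ)) := by
        gcongr with t _ t _
        · exact hp.seqMean_ite_div_le t _ (hℓ t _).1
        · simpa using hp.seqMean_inv_le t
    _ = ∑ t, ℓ t (pol f (x t)) + (Real.log F.card / η + η * (K * T / 2)) := by
        simp only [sum_const, card_univ, Fintype.card_fin, nsmul_eq_mul]
        ring

end Exp4Sequence

theorem exists_validStrat_expLoss_le {ι X : Type*} {K T : ℕ} [NeZero K] (hT : 0 < T)
    {F : Finset ι} (hF : 1 < F.card) (pol : ι → X → Fin K) :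
    ∃ strat, ValidStrat K strat ∧ ∀ (x : Fin T → X) (ℓ : Fin T → Fin K → ℝ),
      (∀ t b, 0 ≤ ℓ t b ∧ ℓ t b ≤ 1) → ∀ f ∈ F,
        expLoss strat x ℓ ≤ ∑ t, ℓ t (pol f (x t)) + 2 * √(K * T * Real.log F.card) := by
  have hFne : F.Nonempty := card_pos.mp (by omega)
  have hlog : 0 < Real.log F.card := Real.log_pos (by exact_mod_cast hF)
  have hKT : (0 : ℝ) < K * T / 2 := by
    have : (0 : ℝ) < K := by exact_mod_cast (NeZero.pos K)
    positivity
  set η := √(Real.log F.card / (K * T / 2))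
  refine ⟨exp4 η F pol, validStrat_exp4 pol hFne, fun x ℓ hℓ f hf => ?_⟩
  refine (expLoss_exp4_le pol (Real.sqrt_pos.mpr (div_pos hlog hKT)) hFne hℓ hf).trans ?_
  rw [Real.div_sqrt_div_add_sqrt_div_mul hlog.le hKT]
  have hle : Real.log F.card * (K * T / 2) ≤ K * T * Real.log F.card := by nlinarith
  linarith [Real.sqrt_le_sqrt hle]

theorem sum_loss_le_marginLoss {X : Type*} {K T : ℕ} [NeZero K] {γ : ℝ} (hγ : 0 ≤ γ)
    (x : Fin T → X) {ℓ : Fin T → Fin K → ℝ} (hℓ : ∀ t b, 0 ≤ ℓ t b) {f : X → Fin K → ℝ}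
    (hf : ∀ x, ∑ b, f x b = 0) {pol : X → Fin K} (hpol : ∀ x b, f x b ≤ f x (pol x)) :
    ∑ t, ℓ t (pol (x t)) ≤ marginLoss γ x ℓ f := by
  refine sum_le_sum fun t _ => ?_
  have hmargin : -γ ≤ f (x t) (pol (x t)) := by
    linarith [nonneg_of_sum_eq_zero_of_forall_le (hf (x t)) (hpol (x t))]
  calc ℓ t (pol (x t)) = if -γ ≤ f (x t) (pol (x t)) then ℓ t (pol (x t)) else 0 :=
        (if_pos hmargin).symm
    _ ≤ ∑ b, if -γ ≤ f (x t) b then ℓ t b else 0 :=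
        single_le_sum (f := fun b => if -γ ≤ f (x t) b then ℓ t b else 0)
          (fun b _ => by split_ifs <;> simp [hℓ t b]) (mem_univ _)

end ContextualBandit

/-- Example 1: finite classes: (a) margin regret `O(K√(T log|F|))` for a
finite regressor class, and (b) the optimal policy regret `O(√(KT log|Π|))` for a finite
policy class, with a shared universal constant. -/
theorem stmt8 :
    ∃ c : ℝ, 0 < c ∧
      ((∀ (X : Type) (K T : ℕ) (γ : ℝ) (F : Finset (X → Fin K → ℝ)),
        2 ≤ K → 1 ≤ T → 0 < γ → 2 ≤ F.card →
        (∀ f ∈ F, ∀ x, ‖f x‖ ≤ 1) → (∀ f ∈ F, ∀ x, ∑ b, f x b = 0) →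
        ∃ strat : List (X × Fin K × ℝ) → X → Fin K → ℝ,
          ValidStrat K strat ∧
          ∀ (x : Fin T → X) (ℓ : Fin T → Fin K → ℝ),
            (∀ t b, 0 ≤ ℓ t b ∧ ℓ t b ≤ 1) →
            expLoss strat x ℓ ≤ sInf (marginLoss γ x ℓ '' ↑F)
              + c * K * Real.sqrt (T * Real.log F.card)) ∧
      (∀ (X : Type) (K T : ℕ) (Pol : Finset (X → Fin K)),
        2 ≤ K → 1 ≤ T → 2 ≤ Pol.card →
        ∃ strat : List (X × Fin K × ℝ) → X → Fin K → ℝ,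
          ValidStrat K strat ∧
          ∀ (x : Fin T → X) (ℓ : Fin T → Fin K → ℝ),
            (∀ t b, 0 ≤ ℓ t b ∧ ℓ t b ≤ 1) →
            expLoss strat x ℓ ≤ sInf ((fun pl : X → Fin K => ∑ t, ℓ t (pl (x t))) '' (Pol : Set (X → Fin K)))
              + c * Real.sqrt (K * T * Real.log Pol.card))) := by
  refine ⟨2, two_pos, ?_, ?_⟩
  · intro X K T γ F hK hT hγ hF _ hzero
    have : NeZero K := ⟨by omega⟩
    choose pol hpol using fun (f : X → Fin K → ℝ) x => Finite.exists_max (f x)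
    obtain ⟨strat, hstrat, hregret⟩ :=
      ContextualBandit.exists_validStrat_expLoss_le (T := T) (by omega) hF pol
    refine ⟨strat, hstrat, fun x ℓ hℓ =>
      le_csInf_image_add (card_pos.mp (by omega)) fun f hf => ?_⟩
    have hsqrt : √(K * T * Real.log F.card) ≤ K * √(T * Real.log F.card) := by
      rw [mul_assoc]
      exact Real.sqrt_mul_le_mul_sqrt (by exact_mod_cast NeZero.one_le) _
    calc expLoss strat x ℓ ≤ ∑ t, ℓ t (pol f (x t)) + 2 * √(K * T * Real.log F.card) :=
          hregret x ℓ hℓ f hf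
      _ ≤ marginLoss γ x ℓ f + 2 * K * √(T * Real.log F.card) := by
          rw [mul_assoc 2 (K : ℝ)]
          exact add_le_add (ContextualBandit.sum_loss_le_marginLoss hγ.le x
            (fun t b => (hℓ t b).1) (hzero f hf) (hpol f))
            (mul_le_mul_of_nonneg_left hsqrt two_pos.le)
  · intro X K T Pol hK hT hPol
    have : NeZero K := ⟨by omega⟩
    obtain ⟨strat, hstrat, hregret⟩ :=
      ContextualBandit.exists_validStrat_expLoss_le (T := T) (by omega) hPol
        fun pl : X → Fin K => pl
    exact ⟨strat, hstrat, fun x ℓ hℓ =>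
      le_csInf_image_add (card_pos.mp (by omega)) fun pl hpl => hregret x ℓ hℓ pl hpl⟩
end
end

section
/- Let K ≥ 2, γ > 0, v ∈ ℝ^K and y* ∈ {1,…,K}. Define v̄ ∈ ℝ^K by v̄_y = v_y − (1/K)·Σ_{y'=1}^K v_{y'}. If the cost-sensitive hinge loss vanishes, i.e. Σ_{y ≠ y*} max(1 + v̄_y/γ, 0) = 0, then the multiclass hinge loss at margin Kγ vanishes, i.e. max(1 − (v_{y*} − max_{y ≠ y*} v_y)/(Kγ), 0) = 0; in particular v_{y*} ≥ Kγ + v_y for all y ≠ y*. -/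
/-! The centred scores sum to zero, so if every one except that of `y*` is at most `-γ`, the
centred score of `y*` is at least `(K - 1) γ`; hence `y*` beats every other class by `K γ`. -/

open Finset

lemma sum_sub_mean_eq_zero {ι : Type*} [Fintype ι] [Nonempty ι] (v : ι → ℝ) :
    ∑ i, (v i - (1 / (Fintype.card ι : ℝ)) * ∑ j, v j) = 0 := by
  have hcard : (Fintype.card ι : ℝ) ≠ 0 := by positivity
  rw [sum_sub_distrib, sum_const, card_univ, nsmul_eq_mul]
  field_simp
  ring

lemma le_neg_of_sum_hinge_eq_zero {ι : Type*} {s : Finset ι} {x : ι → ℝ} {γ : ℝ} (hγ : 0 < γ)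
    (h : ∑ i ∈ s, max (1 + x i / γ) 0 = 0) {i : ι} (hi : i ∈ s) : x i ≤ -γ := by
  have hterm : 1 + x i / γ ≤ 0 := max_eq_right_iff.mp <|
    (sum_eq_zero_iff_of_nonneg fun j _ ↦ le_max_right (1 + x j / γ) 0).mp h i hi
  linarith [(div_le_iff₀ hγ).mp (by linarith : x i / γ ≤ -1)]

lemma card_mul_le_sub_of_sum_eq_zero {ι : Type*} [Fintype ι] [DecidableEq ι] {c : ι → ℝ}
    {γ : ℝ} (hc : ∑ i, c i = 0) {j : ι} (hle : ∀ i ≠ j, c i ≤ -γ) {i : ι} (hij : i ≠ j) :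
    Fintype.card ι * γ ≤ c j - c i := by
  have hsum : ∑ k, (c k + γ) = Fintype.card ι * γ := by
    rw [sum_add_distrib, hc, sum_const, card_univ, nsmul_eq_mul, zero_add]
  have hrest : ∑ k ∈ univ.erase j, (c k + γ) ≤ 0 :=
    sum_nonpos fun k hk ↦ by linarith [hle k (ne_of_mem_erase hk)]
  rw [← add_sum_erase _ _ (mem_univ j)] at hsum
  linarith [hle i hij]

lemma max_one_sub_sub_iSup_div_eq_zero {ι : Type*} [Nonempty ι] {f : ι → ℝ} {a m : ℝ}
    (hm : 0 < m) (h : ∀ i, m + f i ≤ a) : max (1 - (a - ⨆ i, f i) / m) 0 = 0 := by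
  have hsup : ⨆ i, f i ≤ a - m := ciSup_le fun i ↦ by linarith [h i]
  rw [max_eq_right_iff, sub_nonpos, le_div_iff₀ hm]
  linarith

/-- if the cost-sensitive hinge loss (with centered scores) vanishes at margin γ,
then the multiclass hinge loss at margin Kγ vanishes; in particular
`v_{y*} ≥ Kγ + v_y` for every `y ≠ y*`. -/
theorem stmt13 (K : ℕ) (hK : 2 ≤ K) (γ : ℝ) (hγ : 0 < γ)
    (v : Fin K → ℝ) (ystar : Fin K)
    (vbar : Fin K → ℝ) (hvbar : ∀ y, vbar y = v y - (1 / (K : ℝ)) * ∑ y', v y')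
    (hcs : ∑ y ∈ Finset.univ.erase ystar, max (1 + vbar y / γ) 0 = 0) :
    max (1 - (v ystar - ⨆ y : {y : Fin K // y ≠ ystar}, v y.1) / (K * γ)) 0 = 0 ∧
    ∀ y, y ≠ ystar → K * γ + v y ≤ v ystar := by
  have hcentered : ∑ y, vbar y = 0 := by
    have : Nonempty (Fin K) := ⟨ystar⟩
    simpa only [hvbar, Fintype.card_fin] using sum_sub_mean_eq_zero v
  have hmargin : ∀ y, y ≠ ystar → K * γ + v y ≤ v ystar := by
    intro y hy
    have hgap := card_mul_le_sub_of_sum_eq_zero hcentered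
      (fun y hy ↦ le_neg_of_sum_hinge_eq_zero hγ hcs (mem_erase.mpr ⟨hy, mem_univ y⟩)) hy
    rw [Fintype.card_fin, hvbar, hvbar] at hgap
    linarith
  obtain ⟨y, hy⟩ := Fintype.exists_ne_of_one_lt_card (by rw [Fintype.card_fin]; omega) ystar
  have : Nonempty {y : Fin K // y ≠ ystar} := ⟨⟨y, hy⟩⟩
  exact ⟨max_one_sub_sub_iSup_div_eq_zero (by positivity) fun y ↦ hmargin y.1 y.2, hmargin⟩
end

section
/- For every γ > 0, γ̃ > 0 and every integer K ≥ 3, there exist a vector v ∈ ℝ^K with Σ_{y=1}^K v_y = 0 and a label y* ∈ {1,…,K} such that the multiclass hinge loss at margin γ vanishes, max(1 − (v_{y*} − max_{y ≠ y*} v_y)/γ, 0) = 0, while the cost-sensitive hinge loss at margin γ̃ satisfies Σ_{y ≠ y*} max(1 + v_y/γ̃, 0) ≥ 1. -/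
open Finset

/-! The witness is `v = γ (e_a - e_b)` for three distinct labels `a, b, c` with `y* = a`: the
margin of `a` over every other label is exactly `γ`, so the multiclass hinge loss vanishes, yet the
untouched label `c` has score `0` and alone contributes `1` to the cost-sensitive hinge loss,
whatever `γ̃` is. -/

section HingeLoss

variable {ι : Type*}

noncomputable def multiclassHingeLoss (γ : ℝ) (v : ι → ℝ) (ystar : ι) : ℝ :=
  max (1 - (v ystar - ⨆ y : {y : ι // y ≠ ystar}, v y.1) / γ) 0

/-- Written for centered scores `v`, for which `v̄ = v`. -/
noncomputable def costSensitiveHingeLoss [Fintype ι] [DecidableEq ι] (γ : ℝ) (v : ι → ℝ)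
    (ystar : ι) : ℝ :=
  ∑ y ∈ univ.erase ystar, max (1 + v y / γ) 0

theorem multiclassHingeLoss_eq_zero_of_le_margin {γ : ℝ} (hγ : 0 < γ) {v : ι → ℝ} {ystar : ι}
    (h : γ ≤ v ystar - ⨆ y : {y : ι // y ≠ ystar}, v y.1) :
    multiclassHingeLoss γ v ystar = 0 := by
  have : 1 ≤ (v ystar - ⨆ y : {y : ι // y ≠ ystar}, v y.1) / γ := by rwa [one_le_div hγ]
  exact max_eq_right (by linarith)

theorem one_le_costSensitiveHingeLoss [Fintype ι] [DecidableEq ι] {γ : ℝ} {v : ι → ℝ}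
    {ystar c : ι} (hc : c ≠ ystar) (hvc : v c = 0) : 1 ≤ costSensitiveHingeLoss γ v ystar :=
  calc (1 : ℝ) = max (1 + v c / γ) 0 := by simp [hvc]
    _ ≤ costSensitiveHingeLoss γ v ystar :=
      single_le_sum (f := fun y ↦ max (1 + v y / γ) 0) (fun _ _ ↦ le_max_right _ _)
        (mem_erase.2 ⟨hc, mem_univ c⟩)

theorem sum_single_sub_single [Fintype ι] [DecidableEq ι] (a b : ι) (t : ℝ) :
    ∑ y, (Pi.single a t - Pi.single b t : ι → ℝ) y = 0 := by
  simp [sum_sub_distrib]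

theorem iSup_ne_single_sub_single_nonpos [DecidableEq ι] {a : ι} (b : ι) {t : ℝ} (ht : 0 ≤ t) :
    ⨆ y : {y : ι // y ≠ a}, (Pi.single a t - Pi.single b t : ι → ℝ) y.1 ≤ 0 := by
  refine Real.iSup_nonpos fun y ↦ ?_
  have hb : 0 ≤ (Pi.single b t : ι → ℝ) y.1 := by
    rcases eq_or_ne y.1 b with rfl | h <;> simp [*]
  simp [Pi.single_eq_of_ne y.2, hb]

theorem multiclassHingeLoss_single_sub_single [DecidableEq ι] {γ : ℝ} (hγ : 0 < γ) {a b : ι}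
    (hab : a ≠ b) :
    multiclassHingeLoss γ (Pi.single a γ - Pi.single b γ) a = 0 := by
  refine multiclassHingeLoss_eq_zero_of_le_margin hγ ?_
  have hva : (Pi.single a γ - Pi.single b γ : ι → ℝ) a = γ := by simp [Pi.single_eq_of_ne hab]
  linarith [iSup_ne_single_sub_single_nonpos (a := a) b hγ.le]

end HingeLoss

theorem stmt14_general (γ γt : ℝ) (hγ : 0 < γ) (K : ℕ) (hK : 3 ≤ K) :
    ∃ (v : Fin K → ℝ) (ystar : Fin K),
      (∑ y, v y = 0) ∧
      max (1 - (v ystar - ⨆ y : {y : Fin K // y ≠ ystar}, v y.1) / γ) 0 = 0 ∧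
      1 ≤ ∑ y ∈ Finset.univ.erase ystar, max (1 + v y / γt) 0 := by
  let a : Fin K := ⟨0, by omega⟩
  let b : Fin K := ⟨1, by omega⟩
  let c : Fin K := ⟨2, by omega⟩
  have hca : c ≠ a := by simp [a, c, Fin.ext_iff]
  have hcb : c ≠ b := by simp [b, c, Fin.ext_iff]
  have hab : a ≠ b := by simp [a, b, Fin.ext_iff]
  refine ⟨Pi.single a γ - Pi.single b γ, a, sum_single_sub_single a b γ,
    multiclassHingeLoss_single_sub_single hγ hab, one_le_costSensitiveHingeLoss hca ?_⟩
  simp [Pi.single_eq_of_ne hca, Pi.single_eq_of_ne hcb]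

/-- for every γ, γ̃ > 0 and K ≥ 3 there is a centered score vector `v`
and a label `y*` for which the multiclass hinge loss at margin γ vanishes while the
cost-sensitive hinge loss at margin γ̃ is at least 1. -/
theorem stmt14 (γ γt : ℝ) (hγ : 0 < γ) (hγt : 0 < γt) (K : ℕ) (hK : 3 ≤ K) :
    ∃ (v : Fin K → ℝ) (ystar : Fin K),
      (∑ y, v y = 0) ∧
      max (1 - (v ystar - ⨆ y : {y : Fin K // y ≠ ystar}, v y.1) / γ) 0 = 0 ∧
      1 ≤ ∑ y ∈ Finset.univ.erase ystar, max (1 + v y / γt) 0 :=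
  stmt14_general γ γt hγ K hK
end

section
/- Let Θ ⊂ ℝ^d be a convex compact set containing the origin-centered Euclidean unit ball and contained in the Euclidean ball of radius R. Let X be a set, K ≥ 2, γ > 0, and let f : X × Θ → ℝ^K_{=0} be such that θ ↦ f(x;θ)_a is L-Lipschitz with respect to the ℓ2 norm for every x ∈ X and a ∈ {1,…,K}. Fix η > 0, contexts x_1, …, x_T ∈ X and loss vectors ℓ_1, …, ℓ_T ∈ ℝ_{≥0}^K with ‖ℓ_t‖_∞ ≤ B_ℓ. For each t let p_t be the probability measure on Θ with density (with respect to Lebesgue measure on Θ) proportional to exp(−η·Σ_{s=1}^{t−1} ⟨ℓ_s, ψ^γ(f(x_s;θ))⟩) (so p_1 is uniform on Θ). Then for every ε ∈ (0, RL]: Σ_{t=1}^T E_{θ∼p_t} ⟨ℓ_t, ψ^γ(f(x_t;θ))⟩ − inf_{θ∈Θ} Σ_{t=1}^T ⟨ℓ_t, ψ^γ(f(x_t;θ))⟩ ≤ (T·K·B_ℓ·ε)/γ + (d/η)·log(RL/ε) + (η/2)·Σ_{t=1}^T E_{θ∼p_t} ⟨ℓ_t, ψ^γ(f(x_t;θ))⟩².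 -/
noncomputable section

open Finset MeasureTheory

/-- The hinge loss `ψ^γ(u) = max(1 + u/γ, 0)`. -/
def hinge (γ u : ℝ) : ℝ := max (1 + u / γ) 0

/-!
Write `Y n = ∫_Θ exp (-η V n)` for the normaliser of the exponential-weights distribution after
`n` rounds, `V n` being the cumulative hinge loss. Since `exp (-u) ≤ 1 - u + u² / 2` for `u ≥ 0`,
each round gives `log Y (n+1) - log Y n ≤ -η E_n g_n + η² / 2 E_n g_n²`, and these telescope.
From below, `Y T` is at least the integral over the image of `Θ` under the homothety of ratio
`t = ε / (R L)` centred at a minimiser `θ₀` of `V T`: this image lies in `Θ` by convexity, has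
volume `t ^ d vol Θ`, and stays within distance `2ε / L` of `θ₀`. There `V T` exceeds its minimum
by at most `T K B ε / γ`, because the hinge loss is `1/γ`-Lipschitz and, the scores summing to
zero, `∑ₐ (uₐ - vₐ)⁺ = ½ ∑ₐ |uₐ - vₐ|`.
-/

open Real

theorem Real.exp_neg_le_one_sub_add_sq_div_two_s15 {u : ℝ} (hu : 0 ≤ u) :
    exp (-u) ≤ 1 - u + u ^ 2 / 2 := by
  have hcubic : 1 + u + u ^ 2 / 2 + u ^ 3 / 6 ≤ exp u := by
    have := sum_le_exp_of_nonneg hu 4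
    norm_num [sum_range_succ, Nat.factorial] at this
    linarith
  have hq : 0 ≤ 1 - u + u ^ 2 / 2 := by nlinarith [sq_nonneg (u - 1)]
  rw [exp_neg, inv_le_iff_one_le_mul₀ (exp_pos u)]
  -- the product below is `1 + u ^ 3 / 6 + u ^ 4 / 12 + u ^ 5 / 12`
  calc 1 ≤ (1 - u + u ^ 2 / 2) * (1 + u + u ^ 2 / 2 + u ^ 3 / 6) := by
        nlinarith [pow_nonneg hu 3, pow_nonneg hu 4, pow_nonneg hu 5]
    _ ≤ (1 - u + u ^ 2 / 2) * exp u := by gcongr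

theorem hinge_sub_hinge_le {γ : ℝ} (hγ : 0 < γ) (u v : ℝ) :
    hinge γ u - hinge γ v ≤ max (u - v) 0 / γ :=
  calc hinge γ u - hinge γ v ≤ max (1 + u / γ - (1 + v / γ)) (0 - 0) := max_sub_max_le_max _ _ _ _
    _ = max ((u - v) / γ) (0 / γ) := by congr 1 <;> ring
    _ = max (u - v) 0 / γ := max_div_div_right hγ.le _ _

theorem sum_max_zero_eq_half_sum_abs {ι : Type*} (s : Finset ι) (w : ι → ℝ)
    (hw : ∑ a ∈ s, w a = 0) : ∑ a ∈ s, max (w a) 0 = (∑ a ∈ s, |w a|) / 2 := by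
  have hmax (r : ℝ) : max r 0 = (r + |r|) / 2 := by
    rcases le_total 0 r with h | h
    · rw [max_eq_left h, abs_of_nonneg h]; ring
    · rw [max_eq_right h, abs_of_nonpos h]; ring
  simp only [hmax, ← sum_div, sum_add_distrib, hw, zero_add]

theorem sum_mul_hinge_sub_le {ι : Type*} [Fintype ι] {γ B δ : ℝ} (hγ : 0 < γ)
    {ℓ u v : ι → ℝ} (hℓ : ∀ a, 0 ≤ ℓ a ∧ ℓ a ≤ B) (hu : ∑ a, u a = 0) (hv : ∑ a, v a = 0)
    (huv : ∀ a, |u a - v a| ≤ δ) :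
    ∑ a, ℓ a * hinge γ (u a) - ∑ a, ℓ a * hinge γ (v a) ≤ Fintype.card ι * B * δ / (2 * γ) := by
  rcases isEmpty_or_nonempty ι with hι | ⟨⟨a₀⟩⟩
  · simp
  have hB : 0 ≤ B := (hℓ a₀).1.trans (hℓ a₀).2
  calc ∑ a, ℓ a * hinge γ (u a) - ∑ a, ℓ a * hinge γ (v a)
        = ∑ a, ℓ a * (hinge γ (u a) - hinge γ (v a)) := by
          simp only [mul_sub, sum_sub_distrib]
    _ ≤ ∑ a, B * (max (u a - v a) 0 / γ) := sum_le_sum fun a _ =>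
          (mul_le_mul_of_nonneg_left (hinge_sub_hinge_le hγ _ _) (hℓ a).1).trans
            (mul_le_mul_of_nonneg_right (hℓ a).2 (by positivity))
    _ = B / γ * ((∑ a, |u a - v a|) / 2) := by
          rw [← sum_max_zero_eq_half_sum_abs _ _ (by rw [sum_sub_distrib, hu, hv, sub_zero]),
            mul_sum]
          congr 1 with a
          ring
    _ ≤ B / γ * ((Fintype.card ι * δ) / 2) := by
          refine mul_le_mul_of_nonneg_left ?_ (div_nonneg hB hγ.le)
          gcongr
          simpa using sum_le_sum fun a (_ : a ∈ univ) => huv a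
    _ = Fintype.card ι * B * δ / (2 * γ) := by ring

theorem continuous_hinge (γ : ℝ) : Continuous (hinge γ) :=
  (continuous_const.add (continuous_id.div_const γ)).max continuous_const

theorem hinge_nonneg (γ u : ℝ) : 0 ≤ hinge γ u := le_max_right _ _

theorem Fin.sum_filter_lt_eq_sum_range {M : Type*} [AddCommMonoid M] {T : ℕ} (g : ℕ → M)
    (t : Fin T) : ∑ s ∈ univ.filter (fun s : Fin T => s < t), g s = ∑ n ∈ range t, g n := by
  rw [filter_gt_eq_Iio, ← Nat.Iio_eq_range, ← Fin.map_valEmbedding_Iio, sum_map]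
  rfl

theorem Convex.image_homothety_subset {E : Type*} [AddCommGroup E] [Module ℝ E] {Θ : Set E}
    (hconv : Convex ℝ Θ) {c : E} (hc : c ∈ Θ) {t : ℝ} (ht₀ : 0 ≤ t) (ht₁ : t ≤ 1) :
    AffineMap.homothety c t '' Θ ⊆ Θ := by
  rintro _ ⟨z, hz, rfl⟩
  simpa [AffineMap.homothety_apply, add_comm] using hconv.add_smul_sub_mem hc hz ⟨ht₀, ht₁⟩

theorem dist_homothety_center_le {E : Type*} [NormedAddCommGroup E] [NormedSpace ℝ E]
    {Θ : Set E} {R : ℝ} (hΘR : Θ ⊆ Metric.closedBall 0 R) {c z : E} (hc : c ∈ Θ) (hz : z ∈ Θ)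
    {t : ℝ} (ht : 0 ≤ t) : dist (AffineMap.homothety c t z) c ≤ t * (2 * R) := by
  have hc' := mem_closedBall_zero_iff.1 (hΘR hc)
  have hz' := mem_closedBall_zero_iff.1 (hΘR hz)
  rw [dist_homothety_center, Real.norm_of_nonneg ht]
  gcongr
  calc dist c z ≤ ‖c‖ + ‖z‖ := dist_le_norm_add_norm c z
    _ ≤ 2 * R := by linarith

section AddHaar

variable {E : Type*} [NormedAddCommGroup E] [NormedSpace ℝ E] [FiniteDimensional ℝ E]
  [MeasurableSpace E] [BorelSpace E] {μ : Measure E} [μ.IsAddHaarMeasure] {Θ : Set E}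

theorem pow_mul_measureReal_mul_exp_neg_le_setIntegral (hΘ : IsCompact Θ) (hconv : Convex ℝ Θ)
    {F : E → ℝ} (hF : ContinuousOn F Θ) {c : E} (hc : c ∈ Θ) {t C : ℝ} (ht₀ : 0 < t) (ht₁ : t ≤ 1)
    (hC : ∀ ψ ∈ AffineMap.homothety c t '' Θ, F ψ ≤ C) :
    t ^ Module.finrank ℝ E * μ.real Θ * exp (-C) ≤ ∫ θ in Θ, exp (-F θ) ∂μ := by
  set S := AffineMap.homothety c t '' Θ
  have hSΘ : S ⊆ Θ := hconv.image_homothety_subset hc ht₀.le ht₁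
  have hS : IsCompact S := hΘ.image (AffineMap.homothety c t).continuous_of_finiteDimensional
  have hvol : μ.real S = t ^ Module.finrank ℝ E * μ.real Θ := by
    simp [S, Measure.real, ENNReal.toReal_mul, abs_of_pos (pow_pos ht₀ _), (pow_pos ht₀ _).le]
  have hint : IntegrableOn (fun θ => exp (-F θ)) Θ μ := hF.neg.rexp.integrableOn_compact hΘ
  calc t ^ Module.finrank ℝ E * μ.real Θ * exp (-C) = ∫ _ in S, exp (-C) ∂μ := by
        rw [setIntegral_const, hvol, smul_eq_mul]
    _ ≤ ∫ θ in S, exp (-F θ) ∂μ :=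
        setIntegral_mono_on (integrableOn_const hS.measure_ne_top) (hint.mono_set hSΘ)
          hS.measurableSet fun ψ hψ => exp_le_exp.2 (neg_le_neg (hC ψ hψ))
    _ ≤ ∫ θ in Θ, exp (-F θ) ∂μ :=
        setIntegral_mono_set hint (.of_forall fun _ => (exp_pos _).le) hSΘ.eventuallyLE

end AddHaar

namespace ExpWeights

variable {α : Type*} {Θ : Set α} {η : ℝ} {g : ℕ → α → ℝ}

def cumLoss (g : ℕ → α → ℝ) (n : ℕ) (θ : α) : ℝ := ∑ s ∈ range n, g s θ

theorem continuousOn_cumLoss [TopologicalSpace α] (hg : ∀ n, ContinuousOn (g n) Θ) (n : ℕ) :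
    ContinuousOn (cumLoss g n) Θ :=
  continuousOn_finsetSum _ fun s _ => hg s

theorem continuousOn_exp_neg_cumLoss [TopologicalSpace α] (hg : ∀ n, ContinuousOn (g n) Θ)
    (n : ℕ) : ContinuousOn (fun θ => exp (-(η * cumLoss g n θ))) Θ :=
  (continuousOn_const.mul (continuousOn_cumLoss hg n)).neg.rexp

theorem exp_neg_cumLoss_succ_le (hη : 0 ≤ η) {n : ℕ} {θ : α} (hgθ : 0 ≤ g n θ) :
    exp (-(η * cumLoss g (n + 1) θ)) ≤
      exp (-(η * cumLoss g n θ)) - η * (g n θ * exp (-(η * cumLoss g n θ))) +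
        η ^ 2 / 2 * (g n θ ^ 2 * exp (-(η * cumLoss g n θ))) :=
  calc exp (-(η * cumLoss g (n + 1) θ))
        = exp (-(η * cumLoss g n θ)) * exp (-(η * g n θ)) := by
          rw [← exp_add, cumLoss, sum_range_succ, cumLoss]
          ring_nf
    _ ≤ exp (-(η * cumLoss g n θ)) * (1 - η * g n θ + (η * g n θ) ^ 2 / 2) := by
          gcongr
          exact exp_neg_le_one_sub_add_sq_div_two_s15 (mul_nonneg hη hgθ)
    _ = _ := by ring

variable [MeasurableSpace α]

def partitionFn (μ : Measure α) (Θ : Set α) (η : ℝ) (g : ℕ → α → ℝ) (n : ℕ) : ℝ :=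
  ∫ θ in Θ, exp (-(η * cumLoss g n θ)) ∂μ

/-- The expectation of `h` under the exponential-weights distribution that the paper calls
`p_{n+1}`: rounds are counted from `0` here. -/
def mean (μ : Measure α) (Θ : Set α) (η : ℝ) (g : ℕ → α → ℝ) (n : ℕ) (h : α → ℝ) : ℝ :=
  (∫ θ in Θ, h θ * exp (-(η * cumLoss g n θ)) ∂μ) / partitionFn μ Θ η g n

theorem partitionFn_zero (μ : Measure α) : partitionFn μ Θ η g 0 = μ.real Θ := by
  simp [partitionFn, cumLoss]

variable [TopologicalSpace α] [T2Space α] [OpensMeasurableSpace α] {μ : Measure α}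
  [IsFiniteMeasureOnCompacts μ]

theorem partitionFn_pos (hΘ : IsCompact Θ) (hμΘ : μ Θ ≠ 0) (hg : ∀ n, ContinuousOn (g n) Θ)
    (n : ℕ) : 0 < partitionFn μ Θ η g n := by
  have : NeZero (μ.restrict Θ) := ⟨by rwa [Ne, Measure.restrict_eq_zero]⟩
  exact integral_exp_pos ((continuousOn_exp_neg_cumLoss hg n).integrableOn_compact hΘ)

theorem partitionFn_succ_le (hΘ : IsCompact Θ) (hμΘ : μ Θ ≠ 0) (hg : ∀ n, ContinuousOn (g n) Θ)
    (hg0 : ∀ n, ∀ θ ∈ Θ, 0 ≤ g n θ) (hη : 0 ≤ η) (n : ℕ) :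
    partitionFn μ Θ η g (n + 1) ≤ partitionFn μ Θ η g n *
      (1 - η * mean μ Θ η g n (g n) + η ^ 2 / 2 * mean μ Θ η g n (fun θ => g n θ ^ 2)) := by
  set w := fun θ => exp (-(η * cumLoss g n θ))
  have hw : IntegrableOn w Θ μ := (continuousOn_exp_neg_cumLoss hg n).integrableOn_compact hΘ
  have hgw : IntegrableOn (fun θ => g n θ * w θ) Θ μ :=
    ((hg n).mul (continuousOn_exp_neg_cumLoss hg n)).integrableOn_compact hΘ
  have hg2w : IntegrableOn (fun θ => g n θ ^ 2 * w θ) Θ μ :=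
    (((hg n).pow 2).mul (continuousOn_exp_neg_cumLoss hg n)).integrableOn_compact hΘ
  have h₁ : IntegrableOn (fun θ => w θ - η * (g n θ * w θ)) Θ μ := hw.sub (hgw.const_mul η)
  have h₂ : IntegrableOn (fun θ => η ^ 2 / 2 * (g n θ ^ 2 * w θ)) Θ μ := hg2w.const_mul _
  have hY := (partitionFn_pos (η := η) hΘ hμΘ hg n).ne'
  calc partitionFn μ Θ η g (n + 1)
      ≤ ∫ θ in Θ, (w θ - η * (g n θ * w θ) + η ^ 2 / 2 * (g n θ ^ 2 * w θ)) ∂μ :=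
        setIntegral_mono_on ((continuousOn_exp_neg_cumLoss hg _).integrableOn_compact hΘ)
          (h₁.add h₂) hΘ.measurableSet fun θ hθ => exp_neg_cumLoss_succ_le hη (hg0 n θ hθ)
    _ = _ := by
        rw [integral_add h₁ h₂, integral_sub hw (hgw.const_mul η), integral_const_mul,
          integral_const_mul, mean, mean]
        field_simp
        simp only [w, partitionFn]
        ring

theorem log_partitionFn_succ_sub_le (hΘ : IsCompact Θ) (hμΘ : μ Θ ≠ 0)
    (hg : ∀ n, ContinuousOn (g n) Θ) (hg0 : ∀ n, ∀ θ ∈ Θ, 0 ≤ g n θ) (hη : 0 ≤ η) (n : ℕ) :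
    log (partitionFn μ Θ η g (n + 1)) - log (partitionFn μ Θ η g n) ≤
      -(η * mean μ Θ η g n (g n)) + η ^ 2 / 2 * mean μ Θ η g n (fun θ => g n θ ^ 2) := by
  set c := 1 - η * mean μ Θ η g n (g n) + η ^ 2 / 2 * mean μ Θ η g n (fun θ => g n θ ^ 2)
    with hc_def
  have hY : ∀ m, 0 < partitionFn μ Θ η g m := partitionFn_pos hΘ hμΘ hg
  have hstep : partitionFn μ Θ η g (n + 1) ≤ partitionFn μ Θ η g n * c :=
    partitionFn_succ_le hΘ hμΘ hg hg0 hη n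
  have hc : 0 < c := pos_of_mul_pos_right ((hY _).trans_le hstep) (hY n).le
  have hlog := log_le_log (hY _) hstep
  rw [log_mul (hY n).ne' hc.ne'] at hlog
  linarith [log_le_sub_one_of_pos hc]

theorem log_partitionFn_sub_le (hΘ : IsCompact Θ) (hμΘ : μ Θ ≠ 0)
    (hg : ∀ n, ContinuousOn (g n) Θ) (hg0 : ∀ n, ∀ θ ∈ Θ, 0 ≤ g n θ) (hη : 0 ≤ η) (T : ℕ) :
    log (partitionFn μ Θ η g T) - log (μ.real Θ) ≤
      -(η * ∑ n ∈ range T, mean μ Θ η g n (g n)) +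
        η ^ 2 / 2 * ∑ n ∈ range T, mean μ Θ η g n (fun θ => g n θ ^ 2) := by
  rw [mul_sum, mul_sum, ← sum_neg_distrib, ← sum_add_distrib, ← partitionFn_zero,
    ← sum_range_sub fun n => log (partitionFn μ Θ η g n)]
  exact sum_le_sum fun n _ => log_partitionFn_succ_sub_le hΘ hμΘ hg hg0 hη n

section AddHaar

variable {E : Type*} [NormedAddCommGroup E] [NormedSpace ℝ E] [FiniteDimensional ℝ E]
  [MeasurableSpace E] [BorelSpace E] {μ : Measure E} [μ.IsAddHaarMeasure] {Θ : Set E}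

theorem regret_le {η : ℝ} {g : ℕ → E → ℝ} (hΘ : IsCompact Θ) (hconv : Convex ℝ Θ)
    (hμΘ : μ Θ ≠ 0) (hg : ∀ n, ContinuousOn (g n) Θ) (hg0 : ∀ n, ∀ θ ∈ Θ, 0 ≤ g n θ)
    (hη : 0 < η) {T : ℕ} {c : E} (hc : c ∈ Θ) {t δ : ℝ} (ht₀ : 0 < t) (ht₁ : t ≤ 1)
    (hδ : ∀ ψ ∈ AffineMap.homothety c t '' Θ, cumLoss g T ψ ≤ cumLoss g T c + δ) :
    ∑ n ∈ range T, mean μ Θ η g n (g n) - cumLoss g T c ≤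
      δ + Module.finrank ℝ E / η * log t⁻¹ +
        η / 2 * ∑ n ∈ range T, mean μ Θ η g n (fun θ => g n θ ^ 2) := by
  have hvol : 0 < μ.real Θ := ENNReal.toReal_pos hμΘ hΘ.measure_ne_top
  have hlower : t ^ Module.finrank ℝ E * μ.real Θ * exp (-(η * (cumLoss g T c + δ))) ≤
      partitionFn μ Θ η g T :=
    pow_mul_measureReal_mul_exp_neg_le_setIntegral hΘ hconv
      (F := fun θ => η * cumLoss g T θ) (continuousOn_const.mul (continuousOn_cumLoss hg T)) hc
      ht₀ ht₁ fun ψ hψ => mul_le_mul_of_nonneg_left (hδ ψ hψ) hη.le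
  have hupper := log_partitionFn_sub_le hΘ hμΘ hg hg0 hη.le T
  have hlog_lower := log_le_log (by positivity) hlower
  rw [log_mul (by positivity) (exp_pos _).ne', log_mul (by positivity) hvol.ne', log_pow,
    log_exp] at hlog_lower
  rw [log_inv, ← mul_le_mul_iff_of_pos_left hη]
  field_simp
  linarith

end AddHaar

end ExpWeights

open ExpWeights

section HingeRoundLoss

variable {ι X E : Type*} [Fintype ι] {T : ℕ} {γ : ℝ} {f : X → E → ι → ℝ} {x : Fin T → X}
  {ℓ : Fin T → ι → ℝ} {Θ : Set E} {L : NNReal} {B : ℝ}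

/-- The hinge loss of round `n`, set to `0` for `n ≥ T` so that rounds are indexed by `ℕ`. -/
def hingeRoundLoss (γ : ℝ) (f : X → E → ι → ℝ) (x : Fin T → X) (ℓ : Fin T → ι → ℝ) (n : ℕ)
    (θ : E) : ℝ :=
  if h : n < T then ∑ a, ℓ ⟨n, h⟩ a * hinge γ (f (x ⟨n, h⟩) θ a) else 0

theorem hingeRoundLoss_fin (t : Fin T) (θ : E) :
    hingeRoundLoss γ f x ℓ t θ = ∑ a, ℓ t a * hinge γ (f (x t) θ a) := by
  simp [hingeRoundLoss]

theorem cumLoss_hingeRoundLoss (θ : E) :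
    cumLoss (hingeRoundLoss γ f x ℓ) T θ = ∑ t, ∑ a, ℓ t a * hinge γ (f (x t) θ a) := by
  simp only [cumLoss, ← Fin.sum_univ_eq_sum_range, hingeRoundLoss_fin]

theorem hingeRoundLoss_nonneg (hℓ : ∀ t a, 0 ≤ ℓ t a) (n : ℕ) (θ : E) :
    0 ≤ hingeRoundLoss γ f x ℓ n θ := by
  unfold hingeRoundLoss
  split_ifs
  exacts [sum_nonneg fun a _ => mul_nonneg (hℓ _ a) (hinge_nonneg γ _), le_rfl]

theorem continuousOn_hingeRoundLoss [TopologicalSpace E]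
    (hf : ∀ x a, ContinuousOn (fun θ => f x θ a) Θ) (n : ℕ) :
    ContinuousOn (hingeRoundLoss γ f x ℓ n) Θ := by
  unfold hingeRoundLoss
  split_ifs
  exacts [continuousOn_finsetSum _ fun a _ => continuousOn_const.mul
    ((continuous_hinge γ).comp_continuousOn (hf _ a)), continuousOn_const]

theorem cumLoss_hingeRoundLoss_le [PseudoMetricSpace E] {δ : ℝ} (hγ : 0 < γ)
    (hℓ : ∀ t a, 0 ≤ ℓ t a ∧ ℓ t a ≤ B) (hsum : ∀ x θ, θ ∈ Θ → ∑ a, f x θ a = 0)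
    (hLip : ∀ x a, LipschitzOnWith L (fun θ => f x θ a) Θ) {θ θ' : E} (hθ : θ ∈ Θ)
    (hθ' : θ' ∈ Θ) (hδ : L * dist θ θ' ≤ δ) :
    cumLoss (hingeRoundLoss γ f x ℓ) T θ ≤
      cumLoss (hingeRoundLoss γ f x ℓ) T θ' + T * Fintype.card ι * B * δ / (2 * γ) := by
  have hround (t : Fin T) := sum_mul_hinge_sub_le hγ (hℓ t) (hsum (x t) θ hθ) (hsum (x t) θ' hθ')
    fun a => ((hLip (x t) a).dist_le_mul θ hθ θ' hθ').trans hδ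
  have hsum_rounds := sum_le_sum fun t (_ : t ∈ univ) => hround t
  rw [sum_sub_distrib, sum_const, card_univ, Fintype.card_fin, nsmul_eq_mul] at hsum_rounds
  rw [cumLoss_hingeRoundLoss, cumLoss_hingeRoundLoss]
  linear_combination hsum_rounds

theorem cumLoss_hingeRoundLoss_le_of_mem_image_homothety [NormedAddCommGroup E]
    [NormedSpace ℝ E] {R ε : ℝ} (hγ : 0 < γ) (hℓ : ∀ t a, 0 ≤ ℓ t a ∧ ℓ t a ≤ B)
    (hsum : ∀ x θ, θ ∈ Θ → ∑ a, f x θ a = 0)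
    (hLip : ∀ x a, LipschitzOnWith L (fun θ => f x θ a) Θ) (hconv : Convex ℝ Θ)
    (hΘR : Θ ⊆ Metric.closedBall 0 R) {θ₀ : E} (hθ₀ : θ₀ ∈ Θ) (hε : 0 < ε) (hεRL : ε ≤ R * L) :
    ∀ ψ ∈ AffineMap.homothety θ₀ (ε / (R * L)) '' Θ, cumLoss (hingeRoundLoss γ f x ℓ) T ψ ≤
      cumLoss (hingeRoundLoss γ f x ℓ) T θ₀ + T * Fintype.card ι * B * ε / γ := by
  rintro _ ⟨z, hz, rfl⟩
  have hRL : 0 < R * L := hε.trans_le hεRL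
  have ht : 0 ≤ ε / (R * L) := (div_pos hε hRL).le
  have hdist : L * dist (AffineMap.homothety θ₀ (ε / (R * L)) z) θ₀ ≤ 2 * ε :=
    calc L * dist (AffineMap.homothety θ₀ (ε / (R * L)) z) θ₀
        ≤ L * (ε / (R * L) * (2 * R)) := by
          gcongr
          exact dist_homothety_center_le hΘR hθ₀ hz ht
      _ = 2 * ε := by
          field_simp
          exact div_self (mul_comm (R : ℝ) L ▸ hRL.ne')
  convert cumLoss_hingeRoundLoss_le hγ hℓ hsum hLip
    (hconv.image_homothety_subset hθ₀ ht ((div_le_one hRL).2 hεRL) ⟨z, hz, rfl⟩) hθ₀ hdist using 2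
  field_simp

end HingeRoundLoss

theorem stmt15_general (d K T : ℕ)
    (γ : ℝ) (hγ : 0 < γ)
    (Θ : Set (EuclideanSpace ℝ (Fin d)))
    (hconv : Convex ℝ Θ) (hcomp : IsCompact Θ)
    (hball : Metric.closedBall 0 1 ⊆ Θ)
    (R : ℝ) (hΘR : Θ ⊆ Metric.closedBall 0 R)
    (X : Type*) (f : X → EuclideanSpace ℝ (Fin d) → Fin K → ℝ)
    (hsum : ∀ x θ, θ ∈ Θ → ∑ a, f x θ a = 0)
    (L : NNReal) (hLip : ∀ x a, LipschitzOnWith L (fun θ => f x θ a) Θ)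
    (η : ℝ) (hη : 0 < η)
    (x : Fin T → X) (ℓ : Fin T → Fin K → ℝ)
    (Bℓ : ℝ) (hℓ : ∀ t a, 0 ≤ ℓ t a ∧ ℓ t a ≤ Bℓ)
    (W : Fin T → EuclideanSpace ℝ (Fin d) → ℝ)
    (hW : ∀ t θ, W t θ =
      ∑ s ∈ Finset.univ.filter (fun s : Fin T => s < t), ∑ a, ℓ s a * hinge γ (f (x s) θ a))
    (E : Fin T → (EuclideanSpace ℝ (Fin d) → ℝ) → ℝ)
    (hE : ∀ t g, E t g =
      (∫ θ in Θ, g θ * Real.exp (-(η * W t θ))) / (∫ θ in Θ, Real.exp (-(η * W t θ)))) :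
    ∀ ε : ℝ, 0 < ε → ε ≤ R * L →
      ∑ t, E t (fun θ => ∑ a, ℓ t a * hinge γ (f (x t) θ a))
          - sInf ((fun θ => ∑ t, ∑ a, ℓ t a * hinge γ (f (x t) θ a)) '' Θ)
        ≤ T * K * Bℓ * ε / γ + ((d : ℝ) / η) * Real.log (R * L / ε)
          + (η / 2) * ∑ t, E t (fun θ => (∑ a, ℓ t a * hinge γ (f (x t) θ a)) ^ 2) := by
  intro ε hε hεRL
  set g := hingeRoundLoss γ f x ℓ
  have hRL : 0 < R * L := hε.trans_le hεRL
  have h0 : (0 : EuclideanSpace ℝ (Fin d)) ∈ Θ := hball (Metric.mem_closedBall_self zero_le_one)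
  have hμΘ : volume Θ ≠ 0 :=
    ((Metric.measure_closedBall_pos volume 0 one_pos).trans_le (measure_mono hball)).ne'
  have hg := continuousOn_hingeRoundLoss (γ := γ) (x := x) (ℓ := ℓ)
    fun x a => (hLip x a).continuousOn
  have hg0 (n θ) (_ : θ ∈ Θ) : 0 ≤ g n θ := hingeRoundLoss_nonneg (fun t a => (hℓ t a).1) n θ
  obtain ⟨θ₀, hθ₀, hmin⟩ := hcomp.exists_isMinOn ⟨0, h0⟩ (continuousOn_cumLoss hg T)
  have hE' (t : Fin T) (h) : E t h = mean volume Θ η g t h := by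
    have hWg (θ) : W t θ = cumLoss g t θ := by
      simp only [hW, ← hingeRoundLoss_fin]
      exact Fin.sum_filter_lt_eq_sum_range (fun n => g n θ) t
    simp only [hE, hWg]
    rfl
  have hsInf : sInf ((fun θ => ∑ t, ∑ a, ℓ t a * hinge γ (f (x t) θ a)) '' Θ) = cumLoss g T θ₀ := by
    simp only [← cumLoss_hingeRoundLoss]
    exact IsLeast.csInf_eq ⟨⟨θ₀, hθ₀, rfl⟩, by rintro _ ⟨z, hz, rfl⟩; exact hmin hz⟩
  have hregret := regret_le hcomp hconv hμΘ hg hg0 hη hθ₀ (div_pos hε hRL) ((div_le_one hRL).2 hεRL)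
    (by simpa only [Fintype.card_fin] using
      cumLoss_hingeRoundLoss_le_of_mem_image_homothety hγ hℓ hsum hLip hconv hΘR hθ₀ hε hεRL)
  rw [finrank_euclideanSpace_fin, inv_div] at hregret
  rw [hsInf]
  simp only [hE', ← hingeRoundLoss_fin]
  rw [Fin.sum_univ_eq_sum_range (fun n => mean volume Θ η g n (g n)),
    Fin.sum_univ_eq_sum_range (fun n => mean volume Θ η g n (fun θ => g n θ ^ 2))]
  linarith

/-- regret bound for continuous exponential weights (Hedge) over a compact
convex parameter set `Θ ⊆ ℝ^d`, applied to the surrogate hinge losses.  Here `p_t` has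
density proportional to `exp(−η·Σ_{s<t} ⟨ℓ_s, ψ^γ(f(x_s;θ))⟩)` on `Θ`, and expectations
under `p_t` are written as ratios of Lebesgue integrals over `Θ`. -/
theorem stmt15 (d K T : ℕ) (hd : 1 ≤ d) (hK : 2 ≤ K) (hT : 1 ≤ T)
    (γ : ℝ) (hγ : 0 < γ)
    (Θ : Set (EuclideanSpace ℝ (Fin d)))
    (hconv : Convex ℝ Θ) (hcomp : IsCompact Θ)
    (hball : Metric.closedBall 0 1 ⊆ Θ)
    (R : ℝ) (hΘR : Θ ⊆ Metric.closedBall 0 R)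
    (X : Type*) (f : X → EuclideanSpace ℝ (Fin d) → Fin K → ℝ)
    (hsum : ∀ x θ, θ ∈ Θ → ∑ a, f x θ a = 0)
    (L : NNReal) (hLip : ∀ x a, LipschitzOnWith L (fun θ => f x θ a) Θ)
    (η : ℝ) (hη : 0 < η)
    (x : Fin T → X) (ℓ : Fin T → Fin K → ℝ)
    (Bℓ : ℝ) (hℓ : ∀ t a, 0 ≤ ℓ t a ∧ ℓ t a ≤ Bℓ)
    (W : Fin T → EuclideanSpace ℝ (Fin d) → ℝ)
    (hW : ∀ t θ, W t θ =
      ∑ s ∈ Finset.univ.filter (fun s : Fin T => s < t), ∑ a, ℓ s a * hinge γ (f (x s) θ a))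
    (E : Fin T → (EuclideanSpace ℝ (Fin d) → ℝ) → ℝ)
    (hE : ∀ t g, E t g =
      (∫ θ in Θ, g θ * Real.exp (-(η * W t θ))) / (∫ θ in Θ, Real.exp (-(η * W t θ)))) :
    ∀ ε : ℝ, 0 < ε → ε ≤ R * L →
      ∑ t, E t (fun θ => ∑ a, ℓ t a * hinge γ (f (x t) θ a))
          - sInf ((fun θ => ∑ t, ∑ a, ℓ t a * hinge γ (f (x t) θ a)) '' Θ)
        ≤ T * K * Bℓ * ε / γ + ((d : ℝ) / η) * Real.log (R * L / ε)
          + (η / 2) * ∑ t, E t (fun θ => (∑ a, ℓ t a * hinge γ (f (x t) θ a)) ^ 2) :=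
  stmt15_general d K T γ hγ Θ hconv hcomp hball R hΘR X f hsum L hLip η hη x ℓ Bℓ hℓ W hW E hE
end
end
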